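/- Let q ≥ 2 be even, let (P, L) be a finite projective plane of order q, and let O ⊆ P be an oval. Then there exists a point N ∈ P (the nucleus) such that N ∉ O and every tangent line of O contains N; that is, all q+1 tangent lines of O are concurrent. -/

import Mathlib

/-- A finite projective plane of order `q`, given by its set of lines (each line a
finite set of points of the ambient point type `P`): any two distinct points lie on
exactly one common line, any two distinct lines meet in exactly one point, there are
four points no three of which are collinear, and every line has `q + 1` points. -/
structure IsProjectivePlane (q : ℕ) {P : Type} [DecidableEq P] (L : Finset (Finset P)) : Prop where
  exists_unique_line : ∀ p₁ p₂ : P, p₁ ≠ p₂ → ∃! ℓ, ℓ ∈ L ∧ p₁ ∈ ℓ ∧ p₂ ∈ ℓ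
  exists_unique_point : ∀ ℓ₁ ∈ L, ∀ ℓ₂ ∈ L, ℓ₁ ≠ ℓ₂ → ∃! p, p ∈ ℓ₁ ∧ p ∈ ℓ₂
  nondeg : ∃ a b c d : P, a ≠ b ∧ a ≠ c ∧ a ≠ d ∧ b ≠ c ∧ b ≠ d ∧ c ≠ d ∧
      ∀ ℓ ∈ L, (ℓ ∩ ({a, b, c, d} : Finset P)).card ≤ 2
  card_line : ∀ ℓ ∈ L, ℓ.card = q + 1

/-- An oval: a set of `q + 1` points such that every line contains at most two of them. -/
def IsOval (q : ℕ) {P : Type} [DecidableEq P] (L : Finset (Finset P)) (O : Finset P) : Prop :=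
  O.card = q + 1 ∧ ∀ ℓ ∈ L, (ℓ ∩ O).card ≤ 2

/-- A projective bundle: a set of `q² + q + 1` ovals, any two of which meet in
exactly one point. -/
def IsProjectiveBundle (q : ℕ) {P : Type} [DecidableEq P] (L : Finset (Finset P))
    (B : Finset (Finset P)) : Prop :=
  B.card = q ^ 2 + q + 1 ∧ (∀ o ∈ B, IsOval q L o) ∧
    ∀ o₁ ∈ B, ∀ o₂ ∈ B, o₁ ≠ o₂ → (o₁ ∩ o₂).card = 1

/-! In even order `q`, every point `x ∉ O` lies on an odd number of tangents, since the lines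
through `x` partition the `q + 1` points of `O` into parts of size `0`, `1` or `2`. The `q + 1`
tangents (one at each point of `O`) meet a secant `ℓ` in `q + 1` points counted with multiplicity;
two of these are the points of `ℓ ∩ O`, so each of the remaining `q - 1` points of `ℓ` lies on
exactly one tangent. Hence the intersection `N` of two tangents lies on no secant, and for every
point `p ∈ O` the line `Np` is the tangent at `p`. -/

open Finset

def linesThrough {P : Type} [DecidableEq P] (M : Finset (Finset P)) (x : P) :
    Finset (Finset P) :=
  M.filter (x ∈ ·)

def tangentLines {P : Type} [DecidableEq P] (L : Finset (Finset P)) (O : Finset P) :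
    Finset (Finset P) :=
  L.filter fun ℓ => (ℓ ∩ O).card = 1

section

variable {q : ℕ} {P : Type} [DecidableEq P] {L M : Finset (Finset P)} {O : Finset P}

@[simp]
theorem mem_linesThrough {x : P} {ℓ : Finset P} : ℓ ∈ linesThrough M x ↔ ℓ ∈ M ∧ x ∈ ℓ :=
  mem_filter

@[simp]
theorem mem_tangentLines {ℓ : Finset P} :
    ℓ ∈ tangentLines L O ↔ ℓ ∈ L ∧ (ℓ ∩ O).card = 1 :=
  mem_filter

theorem card_filter_eq_zero_add_sum {ι : Type*} {s : Finset ι} {f : ι → ℕ}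
    (hf : ∀ i ∈ s, f i ≤ 1) : (s.filter (f · = 0)).card + ∑ i ∈ s, f i = s.card := by
  rw [card_filter, ← sum_add_distrib, card_eq_sum_ones]
  refine sum_congr rfl fun i hi => ?_
  have := hf i hi
  split_ifs <;> omega

theorem odd_card_filter_eq_one {ι : Type*} {s : Finset ι} {f : ι → ℕ}
    (hf : ∀ i ∈ s, f i ≤ 2) (hodd : Odd (∑ i ∈ s, f i)) : Odd (s.filter (f · = 1)).card := by
  rw [odd_sum_iff_odd_card_odd] at hodd
  convert hodd using 2
  refine filter_congr fun i hi => ?_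
  have := hf i hi
  interval_cases f i <;> decide

namespace IsProjectivePlane

theorem line_eq (hL : IsProjectivePlane q L) {ℓ ℓ' : Finset P} (hℓ : ℓ ∈ L) (hℓ' : ℓ' ∈ L)
    {a b : P} (hab : a ≠ b) (ha : a ∈ ℓ) (hb : b ∈ ℓ) (ha' : a ∈ ℓ') (hb' : b ∈ ℓ') :
    ℓ = ℓ' :=
  (hL.exists_unique_line a b hab).unique ⟨hℓ, ha, hb⟩ ⟨hℓ', ha', hb'⟩

theorem card_linesThrough_inter (hL : IsProjectivePlane q L) {a b : P} (hab : a ≠ b) :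
    ((linesThrough L a).filter (b ∈ ·)).card = 1 :=
  card_eq_one_iff_existsUnique.mpr <| by
    simpa only [filter_filter, mem_filter, linesThrough, and_assoc]
      using hL.exists_unique_line a b hab

theorem card_inter_eq_one (hL : IsProjectivePlane q L) {ℓ ℓ' : Finset P} (hℓ : ℓ ∈ L)
    (hℓ' : ℓ' ∈ L) (hne : ℓ ≠ ℓ') : (ℓ ∩ ℓ').card = 1 :=
  card_eq_one_iff_existsUnique.mpr <| by
    simpa only [mem_inter] using hL.exists_unique_point ℓ hℓ ℓ' hℓ' hne

theorem exists_noncollinear (hL : IsProjectivePlane q L) :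
    ∃ a b c : P, a ≠ b ∧ a ≠ c ∧ ∀ ℓ ∈ L, a ∈ ℓ → b ∈ ℓ → c ∉ ℓ := by
  obtain ⟨a, b, c, d, hab, hac, -, hbc, -, -, hgen⟩ := hL.nondeg
  refine ⟨a, b, c, hab, hac, fun ℓ hℓ ha hb hc => ?_⟩
  have : 2 < (ℓ ∩ {a, b, c, d}).card :=
    two_lt_card.mpr ⟨a, by simp [ha], b, by simp [hb], c, by simp [hc], hab, hac, hbc⟩
  exact (hgen ℓ hℓ).not_gt this

theorem one_le_order (hL : IsProjectivePlane q L) : 1 ≤ q := by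
  obtain ⟨a, b, -, hab, -⟩ := hL.exists_noncollinear
  obtain ⟨ℓ, hℓ, ha, hb⟩ := (hL.exists_unique_line a b hab).exists
  have := one_lt_card.mpr ⟨a, ha, b, hb, hab⟩
  rw [hL.card_line ℓ hℓ] at this
  omega

theorem exists_notMem (hL : IsProjectivePlane q L) (p : P) : ∃ ℓ ∈ L, p ∉ ℓ := by
  obtain ⟨a, b, c, hab, hac, hnc⟩ := hL.exists_noncollinear
  obtain ⟨ℓb, hℓb, hab', hbb⟩ := (hL.exists_unique_line a b hab).exists
  obtain ⟨ℓc, hℓc, hac', hcc⟩ := (hL.exists_unique_line a c hac).exists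
  by_contra! h
  by_cases hpa : p = a
  · have hbc : b ≠ c := fun hbc => hnc ℓb hℓb hab' hbb (hbc ▸ hbb)
    obtain ⟨m, hm, hbm, hcm⟩ := (hL.exists_unique_line b c hbc).exists
    exact hnc m hm (hpa ▸ h m hm) hbm hcm
  · have := hL.line_eq hℓb hℓc (Ne.symm hpa) hab' (h ℓb hℓb) hac' (h ℓc hℓc)
    exact hnc ℓb hℓb hab' hbb (this ▸ hcc)

theorem card_linesThrough (hL : IsProjectivePlane q L) (p : P) :
    (linesThrough L p).card = q + 1 := by
  obtain ⟨ℓ₀, hℓ₀, hp⟩ := hL.exists_notMem p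
  have := card_mul_eq_card_mul (s := linesThrough L p) (t := ℓ₀) (fun ℓ x => x ∈ ℓ)
    (m := 1) (n := 1) (fun ℓ hℓ => ?_) (fun x hx => ?_)
  · simpa only [mul_one, hL.card_line ℓ₀ hℓ₀] using this
  · obtain ⟨hℓL, hpℓ⟩ := mem_linesThrough.mp hℓ
    rw [bipartiteAbove, filter_mem_eq_inter, inter_comm]
    exact hL.card_inter_eq_one hℓL hℓ₀ fun h => hp (h ▸ hpℓ)
  · exact hL.card_linesThrough_inter fun h => hp (h ▸ hx)

theorem sum_card_inter (hL : IsProjectivePlane q L) {S : Finset P} {x : P} (hx : x ∉ S) :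
    ∑ ℓ ∈ linesThrough L x, (ℓ ∩ S).card = S.card := by
  have := sum_card_bipartiteAbove_eq_sum_card_bipartiteBelow (s := linesThrough L x) (t := S)
    (fun ℓ y => y ∈ ℓ)
  simp only [bipartiteAbove, filter_mem_eq_inter, inter_comm S] at this
  rw [this, card_eq_sum_ones]
  exact sum_congr rfl fun y hy => hL.card_linesThrough_inter fun h => hx (h ▸ hy)

theorem sum_card_linesThrough (hL : IsProjectivePlane q L) (hM : M ⊆ L) {ℓ : Finset P}
    (hℓ : ℓ ∈ L) (hℓM : ℓ ∉ M) : ∑ x ∈ ℓ, (linesThrough M x).card = M.card := by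
  calc ∑ x ∈ ℓ, (linesThrough M x).card = ∑ m ∈ M, (ℓ ∩ m).card := by
        simpa only [linesThrough, bipartiteAbove, bipartiteBelow, filter_mem_eq_inter] using
          sum_card_bipartiteAbove_eq_sum_card_bipartiteBelow (s := ℓ) (t := M) (fun x m => x ∈ m)
    _ = ∑ m ∈ M, 1 :=
        sum_congr rfl fun m hm => hL.card_inter_eq_one hℓ (hM hm) fun h => hℓM (h ▸ hm)
    _ = M.card := (card_eq_sum_ones M).symm

end IsProjectivePlane

theorem linesThrough_tangentLines {x : P} :
    linesThrough (tangentLines L O) x = (linesThrough L x).filter fun ℓ => (ℓ ∩ O).card = 1 :=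
  filter_comm _ _ _

theorem eq_of_mem_tangentLines {t : Finset P} (ht : t ∈ tangentLines L O)
    {a b : P} (hat : a ∈ t) (haO : a ∈ O) (hbt : b ∈ t) (hbO : b ∈ O) : a = b :=
  card_le_one.mp (mem_tangentLines.mp ht).2.le a (mem_inter.mpr ⟨hat, haO⟩) b
    (mem_inter.mpr ⟨hbt, hbO⟩)

namespace IsOval

theorem card_linesThrough_tangentLines_of_mem (hL : IsProjectivePlane q L) (hO : IsOval q L O)
    {p : P} (hp : p ∈ O) : (linesThrough (tangentLines L O) p).card = 1 := by
  -- The `q + 1` lines through `p` meet the other `q` points of `O` at most once each.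
  have hsum := hL.sum_card_inter (notMem_erase p O)
  rw [card_erase_of_mem hp, hO.1, Nat.add_sub_cancel] at hsum
  have hcard : ∀ ℓ ∈ linesThrough L p, (ℓ ∩ O.erase p).card + 1 = (ℓ ∩ O).card :=
    fun ℓ hℓ => by
      rw [inter_erase]
      exact card_erase_add_one (mem_inter.mpr ⟨(mem_linesThrough.mp hℓ).2, hp⟩)
  have key := card_filter_eq_zero_add_sum (s := linesThrough L p)
    (f := fun ℓ => (ℓ ∩ O.erase p).card)
    fun ℓ hℓ => by have := hcard ℓ hℓ; have := hO.2 ℓ (mem_linesThrough.mp hℓ).1; omega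
  rw [hsum, hL.card_linesThrough] at key
  have htangent : (linesThrough L p).filter (fun ℓ => (ℓ ∩ O).card = 1) =
      (linesThrough L p).filter (fun ℓ => (ℓ ∩ O.erase p).card = 0) :=
    filter_congr fun ℓ hℓ => by have := hcard ℓ hℓ; omega
  rw [linesThrough_tangentLines, htangent]
  omega

theorem odd_card_linesThrough_tangentLines (hL : IsProjectivePlane q L) (hO : IsOval q L O)
    (heven : Even q) {x : P} (hx : x ∉ O) : Odd (linesThrough (tangentLines L O) x).card := by
  have hsum := hL.sum_card_inter hx
  rw [hO.1] at hsum
  rw [linesThrough_tangentLines]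
  exact odd_card_filter_eq_one (fun ℓ hℓ => hO.2 ℓ (mem_linesThrough.mp hℓ).1)
    (hsum ▸ heven.add_one)

theorem card_tangentLines (hL : IsProjectivePlane q L) (hO : IsOval q L O) :
    (tangentLines L O).card = q + 1 := by
  have := card_mul_eq_card_mul (s := O) (t := tangentLines L O) (fun p t => p ∈ t) (m := 1)
    (n := 1) (fun p hp => hO.card_linesThrough_tangentLines_of_mem hL hp) fun t ht => by
      rw [bipartiteBelow, filter_mem_eq_inter, inter_comm]
      exact (mem_tangentLines.mp ht).2
  simpa only [mul_one, hO.1] using this.symm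

theorem card_linesThrough_tangentLines_le_one (hL : IsProjectivePlane q L) (hO : IsOval q L O)
    (heven : Even q) {ℓ : Finset P} (hℓ : ℓ ∈ L) (hsec : (ℓ ∩ O).card = 2) {x : P}
    (hxℓ : x ∈ ℓ) (hxO : x ∉ O) : (linesThrough (tangentLines L O) x).card ≤ 1 := by
  set τ := fun y => (linesThrough (tangentLines L O) y).card
  have htotal : ∑ y ∈ ℓ, τ y = q + 1 :=
    (hL.sum_card_linesThrough (filter_subset _ _) hℓ (by simp [hsec])).trans
      (hO.card_tangentLines hL)
  have hon : ∑ y ∈ ℓ ∩ O, τ y = 2 := by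
    rw [sum_congr rfl fun y hy => hO.card_linesThrough_tangentLines_of_mem hL (mem_inter.mp hy).2,
      sum_const, smul_eq_mul, mul_one, hsec]
  have hoff : ∑ y ∈ ℓ \ O, τ y = (ℓ \ O).card := by
    rw [← sum_inter_add_sum_sdiff ℓ O, hon] at htotal
    rw [card_sdiff, inter_comm, hsec, hL.card_line ℓ hℓ]
    omega
  by_contra! h
  have : ∑ y ∈ ℓ \ O, 1 < ∑ y ∈ ℓ \ O, τ y :=
    sum_lt_sum
      (fun y hy => (hO.odd_card_linesThrough_tangentLines hL heven (mem_sdiff.mp hy).2).pos)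
      ⟨x, mem_sdiff.mpr ⟨hxℓ, hxO⟩, h⟩
  rw [hoff, ← card_eq_sum_ones] at this
  exact this.false

theorem exists_one_lt_card_linesThrough_tangentLines (hL : IsProjectivePlane q L)
    (hO : IsOval q L O) : ∃ N ∉ O, 1 < (linesThrough (tangentLines L O) N).card := by
  obtain ⟨p₁, hp₁, p₂, hp₂, hp⟩ := one_lt_card.mp (by rw [hO.1]; linarith [hL.one_le_order])
  obtain ⟨t₁, ht₁⟩ := card_pos.mp (hO.card_linesThrough_tangentLines_of_mem hL hp₁ ▸ one_pos)
  obtain ⟨t₂, ht₂⟩ := card_pos.mp (hO.card_linesThrough_tangentLines_of_mem hL hp₂ ▸ one_pos)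
  obtain ⟨ht₁T, hp₁t⟩ := mem_linesThrough.mp ht₁
  obtain ⟨ht₂T, hp₂t⟩ := mem_linesThrough.mp ht₂
  have htne : t₁ ≠ t₂ := by
    rintro rfl
    exact hp (eq_of_mem_tangentLines ht₁T hp₁t hp₁ hp₂t hp₂)
  obtain ⟨N, hN⟩ := card_pos.mp <|
    hL.card_inter_eq_one (filter_subset _ _ ht₁T) (filter_subset _ _ ht₂T) htne ▸ one_pos
  obtain ⟨hN₁, hN₂⟩ := mem_inter.mp hN
  refine ⟨N, fun hNO => hp ?_, one_lt_card.mpr ⟨t₁, mem_linesThrough.mpr ⟨ht₁T, hN₁⟩, t₂,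
    mem_linesThrough.mpr ⟨ht₂T, hN₂⟩, htne⟩⟩
  exact (eq_of_mem_tangentLines ht₁T hN₁ hNO hp₁t hp₁).symm.trans
    (eq_of_mem_tangentLines ht₂T hN₂ hNO hp₂t hp₂)

theorem mem_of_one_lt_card_linesThrough_tangentLines (hL : IsProjectivePlane q L)
    (hO : IsOval q L O) (heven : Even q) {N : P} (hNO : N ∉ O)
    (hN : 1 < (linesThrough (tangentLines L O) N).card) {t : Finset P}
    (ht : t ∈ tangentLines L O) : N ∈ t := by
  obtain ⟨p, hp⟩ := card_pos.mp ((mem_tangentLines.mp ht).2 ▸ one_pos)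
  obtain ⟨hpt, hpO⟩ := mem_inter.mp hp
  obtain ⟨m, hm, hNm, hpm⟩ := (hL.exists_unique_line N p fun h => hNO (h ▸ hpO)).exists
  have hmT : m ∈ tangentLines L O := by
    have := hO.2 m hm
    have := card_pos.mpr ⟨p, mem_inter.mpr ⟨hpm, hpO⟩⟩
    have : (m ∩ O).card ≠ 2 := fun hsec =>
      (hO.card_linesThrough_tangentLines_le_one hL heven hm hsec hNm hNO).not_gt hN
    exact mem_tangentLines.mpr ⟨hm, by omega⟩
  have hmt : m = t := card_le_one.mp (hO.card_linesThrough_tangentLines_of_mem hL hpO).le m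
    (mem_linesThrough.mpr ⟨hmT, hpm⟩) t (mem_linesThrough.mpr ⟨ht, hpt⟩)
  exact hmt ▸ hNm

end IsOval

end

theorem statement_6_general (q : ℕ) (heven : Even q) (P : Type) [DecidableEq P]
    (L : Finset (Finset P)) (hL : IsProjectivePlane q L)
    (O : Finset P) (hO : IsOval q L O) :
    ∃ N : P, N ∉ O ∧ ∀ ℓ ∈ L, (ℓ ∩ O).card = 1 → N ∈ ℓ := by
  obtain ⟨N, hNO, hN⟩ := hO.exists_one_lt_card_linesThrough_tangentLines hL
  refine ⟨N, hNO, fun ℓ hℓ hℓO => ?_⟩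
  exact hO.mem_of_one_lt_card_linesThrough_tangentLines hL heven hNO hN
    (mem_tangentLines.mpr ⟨hℓ, hℓO⟩)

/-- In a finite projective plane of even order `q ≥ 2`, all tangent lines of an
oval `O` are concurrent: there is a point `N ∉ O` (the nucleus) lying on every tangent line
of `O`. -/
theorem statement_6 (q : ℕ) (hq : 2 ≤ q) (heven : Even q) (P : Type) [Fintype P] [DecidableEq P]
    (L : Finset (Finset P)) (hL : IsProjectivePlane q L)
    (O : Finset P) (hO : IsOval q L O) :
    ∃ N : P, N ∉ O ∧ ∀ ℓ ∈ L, (ℓ ∩ O).card = 1 → N ∈ ℓ :=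
  statement_6_general q heven P L hL O hO
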